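/- Under the p-random measure (each site of a rectangle R with dimensions (a,b), a ≤ b and a·p ≤ δ for sufficiently small δ, included in A independently with probability p), the probability that R is internally filled in two-neighbour bootstrap percolation is at most 3^{φ(R)} · exp(−φ(R)·g(a·q)), where q = −log(1−p), φ(R) = a + b, and g(z) = −log(β(1−e^{−z})) with β(u) = (u+√(u(4−3u)))/2. -/

import Mathlib

/-- Two sites of `ℤ²` are adjacent if they are at `ℓ¹`-distance one. -/
def adjZ2 (v w : ℤ × ℤ) : Prop := (v.1 - w.1).natAbs + (v.2 - w.2).natAbs = 1

/-- The closure of initial set `A` under the two-neighbour bootstrap process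
restricted to the region `R`. -/
def bClosure (R A : Set (ℤ × ℤ)) : Set (ℤ × ℤ) :=
  ⋂₀ {B : Set (ℤ × ℤ) | A ∩ R ⊆ B ∧
      ∀ v ∈ R, (∃ w₁ ∈ B, ∃ w₂ ∈ B, w₁ ≠ w₂ ∧ adjZ2 v w₁ ∧ adjZ2 v w₂) → v ∈ B}

noncomputable def betaFn (u : ℝ) : ℝ := (u + Real.sqrt (u * (4 - 3 * u))) / 2

noncomputable def gFn (z : ℝ) : ℝ := - Real.log (betaFn (1 - Real.exp (-z)))

open scoped Classical in
/-- The probability of the event `E` under the `p`-random (product Bernoulli)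
measure on subsets of the finite set `V`. -/
noncomputable def probEvent {ι : Type*} [DecidableEq ι] (V : Finset ι) (p : ℝ)
    (E : Finset ι → Prop) : ℝ :=
  ∑ A ∈ V.powerset, if E A then p ^ A.card * (1 - p) ^ (V.card - A.card) else 0

/-- The rectangle `[1,a] × [1,b]` as a finite set of sites. -/
noncomputable def rectFin (a b : ℕ) : Finset (ℤ × ℤ) := Finset.Icc 1 (a : ℤ) ×ˢ Finset.Icc 1 (b : ℤ)

/-- The rectangle `[1,a] × [1,b]` as a set of sites. -/
def rectSet (a b : ℕ) : Set (ℤ × ℤ) := Set.Icc 1 (a : ℤ) ×ˢ Set.Icc 1 (b : ℤ)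

/-! Count the lattice edges leaving the infected set. Adding a site with two infected neighbours
does not increase this count, and for the `a × b` rectangle it is `2(a+b)`, so an internally
filled rectangle contains at least `k = ⌈(a+b)/2⌉` initially infected sites. A union bound over
`k`-subsets bounds the probability of this by `C(ab, k) pᵏ ≤ (e·ab·p/k)ᵏ ≤ (6ap)ᵏ`. Finally
`e^{-aq} = (1-p)^a`, so `β := β(1 - e^{-aq}) ≈ √(ap)`; precisely `6ap ≤ (3β)²` once `ap ≤ 1/6`,
and `3^(a+b) exp(-(a+b) g(aq)) = (3β)^(a+b)`. -/

open Finset Real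

instance : DecidableRel adjZ2 := fun _ _ => inferInstanceAs (Decidable (_ = _))

lemma adjZ2_comm {v w : ℤ × ℤ} : adjZ2 v w ↔ adjZ2 w v := by
  unfold adjZ2; omega

lemma not_adjZ2_self (v : ℤ × ℤ) : ¬ adjZ2 v v := by
  simp [adjZ2]

/-- Every site has four lattice neighbours, so this counts the lattice edges leaving `S`. -/
def perimeter (S : Finset (ℤ × ℤ)) : ℤ := ∑ v ∈ S, (4 - #{w ∈ S | adjZ2 v w} : ℤ)

lemma perimeter_le_four_mul_card (S : Finset (ℤ × ℤ)) : perimeter S ≤ 4 * #S := by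
  unfold perimeter
  calc ∑ v ∈ S, (4 - #{w ∈ S | adjZ2 v w} : ℤ) ≤ ∑ _v ∈ S, 4 :=
        sum_le_sum fun v _ => by linarith [(#{w ∈ S | adjZ2 v w}).cast_nonneg (α := ℤ)]
    _ = 4 * #S := by rw [sum_const, nsmul_eq_mul, mul_comm]

lemma perimeter_insert {S : Finset (ℤ × ℤ)} {v : ℤ × ℤ} (hv : v ∉ S) :
    perimeter (insert v S) = perimeter S + 4 - 2 * #{w ∈ S | adjZ2 v w} := by
  have hdeg_v : #{w ∈ insert v S | adjZ2 v w} = #{w ∈ S | adjZ2 v w} := by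
    rw [filter_insert, if_neg (not_adjZ2_self v)]
  have hdeg : ∀ w ∈ S, (#{x ∈ insert v S | adjZ2 w x} : ℤ) =
      #{x ∈ S | adjZ2 w x} + if adjZ2 v w then 1 else 0 := by
    intro w _
    by_cases h : adjZ2 v w
    · rw [filter_insert, if_pos (adjZ2_comm.1 h),
        card_insert_of_notMem fun hv' => hv (mem_filter.1 hv').1]
      simp [h]
    · rw [filter_insert, if_neg fun h' => h (adjZ2_comm.1 h')]
      simp [h]
  unfold perimeter
  rw [sum_insert hv, hdeg_v, sum_congr rfl fun w hw => by rw [hdeg w hw], natCast_card_filter]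
  simp only [← sub_sub, sum_sub_distrib]
  ring

lemma perimeter_insert_le {S : Finset (ℤ × ℤ)} {v : ℤ × ℤ} (hv : v ∉ S)
    (hdeg : 1 < #{w ∈ S | adjZ2 v w}) : perimeter (insert v S) ≤ perimeter S := by
  rw [perimeter_insert hv]; omega

lemma exists_closed_superset {R A : Finset (ℤ × ℤ)} (hA : A ⊆ R) :
    ∃ T, A ⊆ T ∧ T ⊆ R ∧ (∀ v ∈ R, 1 < #{w ∈ T | adjZ2 v w} → v ∈ T) ∧
      perimeter T ≤ perimeter A := by
  by_cases hclosed : ∀ v ∈ R, 1 < #{w ∈ A | adjZ2 v w} → v ∈ A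
  · exact ⟨A, subset_rfl, hA, hclosed, le_rfl⟩
  push Not at hclosed
  obtain ⟨v, hvR, hdeg, hvA⟩ := hclosed
  obtain ⟨T, hAT, hTR, hT, hper⟩ := exists_closed_superset (insert_subset hvR hA)
  exact ⟨T, (subset_insert v A).trans hAT, hTR, hT, hper.trans (perimeter_insert_le hvA hdeg)⟩
termination_by #(R \ A)
decreasing_by
  rw [sdiff_insert]
  exact card_erase_lt_of_mem (mem_sdiff.2 ⟨hvR, hvA⟩)

lemma perimeter_le_of_bClosure_eq {R A : Finset (ℤ × ℤ)} (hA : A ⊆ R)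
    (hfill : bClosure R A = R) : perimeter R ≤ perimeter A := by
  obtain ⟨T, hAT, hTR, hT, hper⟩ := exists_closed_superset hA
  have hRT : bClosure R A ⊆ T := by
    refine Set.sInter_subset_of_mem ⟨fun v hv => hAT hv.1, fun v hv hnbrs => hT v hv ?_⟩
    obtain ⟨w₁, h₁, w₂, h₂, hne, hadj₁, hadj₂⟩ := hnbrs
    exact one_lt_card.2 ⟨w₁, mem_filter.2 ⟨h₁, hadj₁⟩, w₂, mem_filter.2 ⟨h₂, hadj₂⟩, hne⟩
  rw [hfill, coe_subset] at hRT
  rwa [← subset_antisymm hTR hRT]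

def unitVectors : Finset (ℤ × ℤ) := {(1, 0), (-1, 0), (0, 1), (0, -1)}

lemma adjZ2_iff_sub_mem_unitVectors {v w : ℤ × ℤ} : adjZ2 v w ↔ w - v ∈ unitVectors := by
  obtain ⟨x, y⟩ := v
  obtain ⟨x', y'⟩ := w
  simp only [adjZ2, unitVectors, mem_insert, mem_singleton, Prod.mk_sub_mk, Prod.mk.injEq]
  omega

lemma card_filter_adjZ2 (S : Finset (ℤ × ℤ)) (v : ℤ × ℤ) :
    #{w ∈ S | adjZ2 v w} = #{d ∈ unitVectors | v + d ∈ S} :=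
  card_nbij' (· - v) (v + ·)
    (fun w hw => by
      simp only [coe_filter, Set.mem_ofPred_eq, adjZ2_iff_sub_mem_unitVectors] at hw ⊢
      simpa using hw.symm)
    (fun d hd => by
      simp only [coe_filter, Set.mem_ofPred_eq, adjZ2_iff_sub_mem_unitVectors] at hd ⊢
      simpa using hd.symm)
    (fun w _ => by simp) (fun d _ => by simp)

lemma perimeter_eq_sum_unitVectors (S : Finset (ℤ × ℤ)) :
    perimeter S = ∑ d ∈ unitVectors, (#{v ∈ S | v + d ∉ S} : ℤ) := by
  have hcompl : ∀ v,
      (4 - #{d ∈ unitVectors | v + d ∈ S} : ℤ) = #{d ∈ unitVectors | v + d ∉ S} := by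
    intro v
    have := card_filter_add_card_filter_not (s := unitVectors) (fun d => v + d ∈ S)
    have h4 : #unitVectors = 4 := rfl
    omega
  simp only [perimeter, card_filter_adjZ2]
  rw [sum_congr rfl fun v _ => hcompl v]
  simp only [natCast_card_filter]
  exact sum_comm

lemma two_mul_add_le_perimeter_rectFin {a b : ℕ} (ha : 1 ≤ a) (hb : 1 ≤ b) :
    2 * ((a : ℤ) + b) ≤ perimeter (rectFin a b) := by
  have face : ∀ d (F : Finset (ℤ × ℤ)), (∀ v ∈ F, v ∈ rectFin a b ∧ v + d ∉ rectFin a b) →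
      (#F : ℤ) ≤ #{v ∈ rectFin a b | v + d ∉ rectFin a b} :=
    fun d F hF => by exact_mod_cast card_le_card fun v hv => mem_filter.2 (hF v hv)
  have right := face (1, 0) ({(a : ℤ)} ×ˢ Icc 1 (b : ℤ)) (by simp [rectFin]; omega)
  have left := face (-1, 0) ({1} ×ˢ Icc 1 (b : ℤ)) (by simp [rectFin]; omega)
  have top := face (0, 1) (Icc 1 (a : ℤ) ×ˢ {(b : ℤ)}) (by simp [rectFin]; omega)
  have bottom := face (0, -1) (Icc 1 (a : ℤ) ×ˢ {1}) (by simp [rectFin]; omega)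
  rw [perimeter_eq_sum_unitVectors]
  simp only [unitVectors]
  rw [sum_insert (by decide), sum_insert (by decide), sum_insert (by decide), sum_singleton]
  simp at right left top bottom
  omega

lemma coe_rectFin (a b : ℕ) : (rectFin a b : Set (ℤ × ℤ)) = rectSet a b := by
  simp [rectFin, rectSet]

lemma card_rectFin (a b : ℕ) : #(rectFin a b) = a * b := by
  simp [rectFin]

lemma add_le_two_mul_card_of_bClosure_eq {a b : ℕ} (ha : 1 ≤ a) (hb : 1 ≤ b)
    {A : Finset (ℤ × ℤ)} (hA : A ⊆ rectFin a b) (hfill : bClosure (rectSet a b) A = rectSet a b) :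
    a + b ≤ 2 * #A := by
  rw [← coe_rectFin] at hfill
  have := (two_mul_add_le_perimeter_rectFin ha hb).trans
    ((perimeter_le_of_bClosure_eq hA hfill).trans (perimeter_le_four_mul_card A))
  omega

section Probability

variable {ι : Type*} [DecidableEq ι] {V : Finset ι} {p : ℝ}

lemma probEvent_eq_sum_filter (E : Finset ι → Prop) [DecidablePred E] :
    probEvent V p E = ∑ A ∈ V.powerset with E A, p ^ #A * (1 - p) ^ (#V - #A) := by
  rw [sum_filter]; unfold probEvent; congr!

lemma probEvent_le_sum {κ : Type*} (hp0 : 0 ≤ p) (hp1 : p ≤ 1) (I : Finset κ)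
    {E : Finset ι → Prop} {F : κ → Finset ι → Prop} (h : ∀ A ⊆ V, E A → ∃ i ∈ I, F i A) :
    probEvent V p E ≤ ∑ i ∈ I, probEvent V p (F i) := by
  classical
  unfold probEvent
  rw [sum_comm]
  refine sum_le_sum fun A hA => ?_
  have hw : 0 ≤ p ^ #A * (1 - p) ^ (#V - #A) :=
    mul_nonneg (pow_nonneg hp0 _) (pow_nonneg (sub_nonneg.2 hp1) _)
  split_ifs with hE
  · obtain ⟨i, hi, hF⟩ := h A (mem_powerset.1 hA) hE
    calc p ^ #A * (1 - p) ^ (#V - #A) = if F i A then p ^ #A * (1 - p) ^ (#V - #A) else 0 :=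
          (if_pos hF).symm
      _ ≤ _ := single_le_sum (f := fun i => if F i A then _ else 0)
          (fun j _ => by split_ifs <;> simp [hw]) hi
  · exact sum_nonneg fun j _ => by split_ifs <;> simp [hw]

lemma probEvent_mono (hp0 : 0 ≤ p) (hp1 : p ≤ 1) {E F : Finset ι → Prop}
    (h : ∀ A ⊆ V, E A → F A) : probEvent V p E ≤ probEvent V p F := by
  simpa using probEvent_le_sum hp0 hp1 {()} (F := fun _ => F) (by simpa using h)

lemma probEvent_superset {K : Finset ι} (hK : K ⊆ V) : probEvent V p (K ⊆ ·) = p ^ #K := by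
  have hIcc : {A ∈ V.powerset | K ⊆ A} = Icc K V := by ext A; simp [and_comm]
  have hdisj : ∀ B ∈ (V \ K).powerset, Disjoint K B := fun B hB =>
    disjoint_of_subset_right (mem_powerset.1 hB) disjoint_sdiff
  rw [probEvent_eq_sum_filter, hIcc, Icc_eq_image_powerset hK,
    sum_image fun B₁ hB₁ B₂ hB₂ h => by
      rw [← union_sdiff_cancel_left (hdisj B₁ hB₁), ← union_sdiff_cancel_left (hdisj B₂ hB₂),
        h]]
  calc ∑ B ∈ (V \ K).powerset, p ^ #(K ∪ B) * (1 - p) ^ (#V - #(K ∪ B))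
      = ∑ B ∈ (V \ K).powerset, p ^ #K * (p ^ #B * (1 - p) ^ (#(V \ K) - #B)) :=
        sum_congr rfl fun B hB => by
          rw [card_union_of_disjoint (hdisj B hB), card_sdiff_of_subset hK, pow_add, mul_assoc,
            Nat.sub_add_eq]
    _ = p ^ #K := by rw [← mul_sum, sum_pow_mul_eq_add_pow, add_sub_cancel, one_pow, mul_one]

lemma probEvent_le_choose_mul_pow (hp0 : 0 ≤ p) (hp1 : p ≤ 1) (k : ℕ) :
    probEvent V p (fun A => k ≤ #A) ≤ (#V).choose k * p ^ k := by
  calc probEvent V p (fun A => k ≤ #A) ≤ ∑ K ∈ V.powersetCard k, probEvent V p (K ⊆ ·) :=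
        probEvent_le_sum hp0 hp1 _ fun A hA hk => by
          obtain ⟨K, hKA, hK⟩ := exists_subset_card_eq hk
          exact ⟨K, mem_powersetCard.2 ⟨hKA.trans hA, hK⟩, hKA⟩
    _ = (#V).choose k * p ^ k := by
        rw [sum_congr rfl fun K hK => by
          rw [probEvent_superset (mem_powersetCard.1 hK).1, (mem_powersetCard.1 hK).2],
          sum_const, card_powersetCard, nsmul_eq_mul]

end Probability

lemma choose_mul_pow_le (n k : ℕ) {x : ℝ} (hx : 0 ≤ x) :
    n.choose k * x ^ k ≤ (exp 1 * n * x / k) ^ k := by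
  rcases k.eq_zero_or_pos with rfl | hk
  · simp
  have hk' : (0 : ℝ) < k := by exact_mod_cast hk
  have hfact : (k : ℝ) ^ k / k.factorial ≤ exp 1 ^ k := by
    rw [← exp_nat_mul, mul_one]; exact pow_div_factorial_le_exp _ hk'.le k
  calc n.choose k * x ^ k ≤ (n : ℝ) ^ k / k.factorial * x ^ k :=
        mul_le_mul_of_nonneg_right (Nat.choose_le_pow_div k n) (by positivity)
    _ = (n * x / k) ^ k * ((k : ℝ) ^ k / k.factorial) := by
        rw [div_pow, mul_pow]; field_simp
    _ ≤ (n * x / k) ^ k * exp 1 ^ k := by gcongr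
    _ = (exp 1 * n * x / k) ^ k := by rw [← mul_pow]; ring

lemma pow_le_pow_of_le_sq {x y : ℝ} {k m : ℕ} (hx0 : 0 ≤ x) (hx1 : x ≤ 1) (hy : 0 ≤ y)
    (hxy : x ≤ y ^ 2) (hmk : m ≤ 2 * k) : x ^ k ≤ y ^ m := by
  refine (pow_le_pow_iff_left₀ (by positivity) (by positivity) two_ne_zero).1 ?_
  calc (x ^ k) ^ 2 = x ^ (2 * k) := by rw [← pow_mul, mul_comm]
    _ ≤ x ^ m := pow_le_pow_of_le_one hx0 hx1 hmk
    _ ≤ (y ^ 2) ^ m := pow_le_pow_left₀ hx0 hxy m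
    _ = (y ^ m) ^ 2 := by rw [← pow_mul, ← pow_mul, mul_comm]

lemma exp_neg_mul_neg_log_one_sub {p : ℝ} (hp : p < 1) (n : ℕ) :
    exp (-(n * -log (1 - p))) = (1 - p) ^ n := by
  rw [mul_neg, neg_neg, exp_nat_mul, exp_log (by linarith)]

lemma one_sub_one_sub_pow_le {p : ℝ} (hp : p ≤ 1) (n : ℕ) : 1 - (1 - p) ^ n ≤ n * p := by
  have := one_add_mul_le_pow (a := -p) (by linarith) n
  rw [← sub_eq_add_neg] at this
  linarith

lemma div_one_add_le_one_sub_one_sub_pow {p : ℝ} (hp0 : 0 ≤ p) (hp1 : p ≤ 1) (n : ℕ) :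
    n * p / (1 + n * p) ≤ 1 - (1 - p) ^ n := by
  have h1 : (1 - p) ^ n ≤ exp (-(n * p)) := by
    rw [neg_mul_eq_mul_neg, exp_nat_mul]
    exact pow_le_pow_left₀ (by linarith) (by linarith [add_one_le_exp (-p)]) n
  have h2 : exp (n * p) * exp (-(n * p)) = 1 := by rw [← exp_add, add_neg_cancel, exp_zero]
  have h3 := add_one_le_exp (n * p)
  have h4 : 0 ≤ (n : ℝ) * p := by positivity
  rw [div_le_iff₀ (by positivity)]
  nlinarith [exp_pos (-(n * p))]

lemma sq_betaFn_ge {u : ℝ} (hu0 : 0 ≤ u) (hu : u ≤ 4 / 3) :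
    u * (4 - 3 * u) / 4 ≤ betaFn u ^ 2 := by
  have hX : 0 ≤ u * (4 - 3 * u) := mul_nonneg hu0 (by linarith)
  have hsq := sq_sqrt hX
  have := sqrt_nonneg (u * (4 - 3 * u))
  unfold betaFn
  nlinarith

lemma betaFn_pos {u : ℝ} (hu0 : 0 < u) : 0 < betaFn u := by
  unfold betaFn; positivity

lemma six_mul_le_sq_three_mul_betaFn {t u : ℝ} (ht0 : 0 ≤ t) (ht : t ≤ 1 / 6)
    (hlo : t / (1 + t) ≤ u) (hhi : u ≤ t) : 6 * t ≤ (3 * betaFn u) ^ 2 := by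
  have hu0 : 0 ≤ u := (div_nonneg ht0 (by linarith)).trans hlo
  have hβ := sq_betaFn_ge hu0 (by linarith)
  rw [div_le_iff₀ (by linarith)] at hlo
  nlinarith [mul_le_mul_of_nonneg_left hlo (by linarith : (0:ℝ) ≤ 4 - 3 * t)]

lemma three_pow_mul_exp_neg_mul_gFn {z : ℝ} (n : ℕ) (hβ : 0 < betaFn (1 - exp (-z))) :
    3 ^ n * exp (-(n : ℝ) * gFn z) = (3 * betaFn (1 - exp (-z))) ^ n := by
  rw [gFn, neg_mul_neg, exp_nat_mul, exp_log hβ, mul_pow]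

lemma probEvent_bClosure_rectSet_eq_le {a b : ℕ} (ha : 1 ≤ a) (hb : 1 ≤ b) {p : ℝ}
    (hp0 : 0 ≤ p) (hp1 : p ≤ 1) :
    probEvent (rectFin a b) p (fun A => bClosure (rectSet a b) ↑A = rectSet a b) ≤
      (6 * (a * p)) ^ ((a + b + 1) / 2) := by
  set k := (a + b + 1) / 2
  have hk : (0 : ℝ) < k := Nat.cast_pos.2 (by omega)
  have hbk : (b : ℝ) ≤ 2 * k := by exact_mod_cast (by omega : b ≤ 2 * k)
  calc probEvent (rectFin a b) p (fun A => bClosure (rectSet a b) ↑A = rectSet a b)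
      ≤ probEvent (rectFin a b) p (fun A => k ≤ #A) :=
        probEvent_mono hp0 hp1 fun A hA hfill => by
          have := add_le_two_mul_card_of_bClosure_eq ha hb hA hfill
          omega
    _ ≤ (a * b).choose k * p ^ k := by
        simpa [card_rectFin] using probEvent_le_choose_mul_pow hp0 hp1 k (V := rectFin a b)
    _ ≤ (exp 1 * (a * b : ℕ) * p / k) ^ k := choose_mul_pow_le _ _ hp0
    _ ≤ (6 * (a * p)) ^ k := by
        gcongr
        rw [div_le_iff₀ hk, Nat.cast_mul]
        calc exp 1 * (a * b) * p = exp 1 * (a * p) * b := by ring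
          _ ≤ 3 * (a * p) * (2 * k) := by gcongr; exact exp_one_lt_d9.le.trans (by norm_num)
          _ = 6 * (a * p) * k := by ring

/-- Lemma 2 of Gravner–Holroyd–Morris: the probability that a small rectangle
with dimensions `(a,b)`, `a ≤ b`, `a·p ≤ δ`, is internally filled is at most
`3^φ(R) · exp(−φ(R)·g(aq))`. -/
theorem prob_internally_filled_le :
    ∃ δ > (0:ℝ), ∀ (p : ℝ) (a b : ℕ), 0 < p → p < 1 → 1 ≤ a → a ≤ b →
      (a : ℝ) * p ≤ δ →
      probEvent (rectFin a b) p (fun A => bClosure (rectSet a b) ↑A = rectSet a b) ≤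
        (3 : ℝ) ^ (a + b) *
          Real.exp (-((a + b : ℕ) : ℝ) * gFn ((a : ℝ) * (-Real.log (1 - p)))) := by
  refine ⟨1 / 6, by norm_num, fun p a b hp hp1 ha hab hδ => ?_⟩
  set β := betaFn (1 - exp (-(a * -log (1 - p))))
  have hu := exp_neg_mul_neg_log_one_sub hp1 a
  have hβ : 6 * (a * p) ≤ (3 * β) ^ 2 :=
    six_mul_le_sq_three_mul_betaFn (by positivity) hδ
      (hu ▸ div_one_add_le_one_sub_one_sub_pow hp.le hp1.le a)
      (hu ▸ one_sub_one_sub_pow_le hp1.le a)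
  have hβ0 : 0 < β := betaFn_pos <| by
    rw [hu]; exact sub_pos.2 (pow_lt_one₀ (by linarith) (by linarith) (by omega))
  calc probEvent (rectFin a b) p (fun A => bClosure (rectSet a b) ↑A = rectSet a b)
      ≤ (6 * (a * p)) ^ ((a + b + 1) / 2) :=
        probEvent_bClosure_rectSet_eq_le ha (ha.trans hab) hp.le hp1.le
    _ ≤ (3 * β) ^ (a + b) :=
        pow_le_pow_of_le_sq (by positivity) (by linarith) (by positivity) hβ (by omega)
    _ = _ := (three_pow_mul_exp_neg_mul_gFn _ hβ0).symm
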